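/- arXiv:1901.08606 — 10 statements merged into one kernel-verified Lean document; each statement's English description precedes it below -/
import Mathlib

section
/- For all j, k, ℓ, m ∈ [n−1], the matrices e^{(p)}_{(j,k)} satisfy the product formula e^{(p)}_{(j,k)} · e^{(p)}_{(ℓ,m)} = (δ_{kℓ} + r_ℓ) · e^{(p)}_{(j,m)}, where δ denotes the Kronecker delta. -/
open Matrix

/-- The ratio `r_j := p_j / p_n` for `j ∈ [n-1]`, with the state space `[n]` modeled as
`Fin (m+1)`, the last state `n` as `Fin.last m`, and `[n-1]` as `Fin m` via `Fin.castSucc`. -/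
noncomputable def r (m : ℕ) (p : Fin (m + 1) → ℝ) (j : Fin m) : ℝ :=
  p j.castSucc / p (Fin.last m)

/-- `e^{(p)}_{(j,k)} := (e_j − r_j e_n)(e_k^T − e_n^T)` as an `(m+1) × (m+1)` real matrix. -/
noncomputable def Ep (m : ℕ) (p : Fin (m + 1) → ℝ) (j k : Fin m) :
    Matrix (Fin (m + 1)) (Fin (m + 1)) ℝ :=
  Matrix.vecMulVec
    (fun a => (if a = j.castSucc then (1 : ℝ) else 0) -
      r m p j * (if a = Fin.last m then (1 : ℝ) else 0))
    (fun b => (if b = k.castSucc then (1 : ℝ) else 0) - (if b = Fin.last m then (1 : ℝ) else 0))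

/-- `e^{(p)}_{(j,k)} · e^{(p)}_{(ℓ,m)} = (δ_{kℓ} + r_ℓ) · e^{(p)}_{(j,m)}`. -/
theorem stmt3 (m : ℕ) (hm : 1 ≤ m) (p : Fin (m + 1) → ℝ)
    (hp : ∀ a, 0 < p a) (hsum : ∑ a, p a = 1) (j k l mm : Fin m) :
    Ep m p j k * Ep m p l mm =
      ((if k = l then (1 : ℝ) else 0) + r m p l) • Ep m p j mm := by
  ext a b
  simp only [Ep, Matrix.mul_apply, Matrix.vecMulVec_apply, Matrix.smul_apply, smul_eq_mul]
  have hkl : (k.castSucc ≠ Fin.last m) := Fin.castSucc_lt_last k |>.ne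
  have hll : (l.castSucc ≠ Fin.last m) := Fin.castSucc_lt_last l |>.ne
  have key : ∑ c : Fin (m+1),
      ((if c = k.castSucc then (1:ℝ) else 0) - (if c = Fin.last m then 1 else 0)) *
      ((if c = l.castSucc then (1:ℝ) else 0) - r m p l * (if c = Fin.last m then 1 else 0)) =
      (if k = l then 1 else 0) + r m p l := by
    simp only [sub_mul, mul_sub, Finset.sum_sub_distrib, mul_ite, ite_mul, mul_one, mul_zero,
      zero_mul, one_mul, Finset.sum_ite_eq', Finset.mem_univ, if_true]
    rw [if_neg hll, if_neg hkl.symm]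
    rcases eq_or_ne k l with h | h
    · simp [h]
    · rw [if_neg (by simpa [Fin.castSucc_inj] using h.symm), if_neg h]; ring
  calc ∑ c : Fin (m+1),
      (((if a = j.castSucc then (1:ℝ) else 0) - r m p j * (if a = Fin.last m then 1 else 0)) *
        ((if c = k.castSucc then (1:ℝ) else 0) - (if c = Fin.last m then 1 else 0))) *
      (((if c = l.castSucc then (1:ℝ) else 0) - r m p l * (if c = Fin.last m then 1 else 0)) *
        ((if b = mm.castSucc then (1:ℝ) else 0) - (if b = Fin.last m then 1 else 0)))
      = (((if a = j.castSucc then (1:ℝ) else 0) - r m p j * (if a = Fin.last m then 1 else 0)) *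
        ((if b = mm.castSucc then (1:ℝ) else 0) - (if b = Fin.last m then 1 else 0))) *
        ∑ c : Fin (m+1),
          ((if c = k.castSucc then (1:ℝ) else 0) - (if c = Fin.last m then 1 else 0)) *
          ((if c = l.castSucc then (1:ℝ) else 0) - r m p l * (if c = Fin.last m then 1 else 0)) := by
        rw [Finset.mul_sum]; exact Finset.sum_congr rfl fun c _ => by ring
    _ = _ := by rw [key]; ring
end

section
/- The (n−1)² matrices {e^{(p)}_{(j,k)} : j, k ∈ [n−1]} form a basis of the real vector space {X an n×n real matrix : X1 = 0 and pX = 0}, where 1 is the all-ones column vector and p acts as a row vector; in particular, each e^{(p)}_{(j,k)} satisfies e^{(p)}_{(j,k)}1 = 0 and p·e^{(p)}_{(j,k)} = 0, the family is linearly independent, and this subspace has dimension (n−1)². -/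
open Matrix

/-- The subspace of real `(m+1) × (m+1)` matrices `X` with `X1 = 0` (vanishing row sums)
and `pX = 0` (`p` acting as a row vector). -/
def annih (m : ℕ) (p : Fin (m + 1) → ℝ) :
    Submodule ℝ (Matrix (Fin (m + 1)) (Fin (m + 1)) ℝ) where
  carrier := {X | X.mulVec (fun _ => (1 : ℝ)) = 0 ∧ Matrix.vecMul p X = 0}
  add_mem' := by
    intro a b ha hb
    simp only [Set.mem_setOf_eq] at ha hb ⊢
    constructor
    · simp [Matrix.add_mulVec, ha.1, hb.1]
    · simp [Matrix.vecMul_add, ha.2, hb.2]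
  zero_mem' := by
    simp only [Set.mem_setOf_eq]
    constructor <;> simp
  smul_mem' := by
    intro c a ha
    simp only [Set.mem_setOf_eq] at ha ⊢
    constructor
    · simp [Matrix.smul_mulVec, ha.1]
    · have h : Matrix.vecMul p (c • a) = c • Matrix.vecMul p a := by
        ext b
        simp [Matrix.vecMul, dotProduct, Finset.mul_sum, mul_left_comm]
      rw [h, ha.2, smul_zero]

/-!
A matrix `X` with `X1 = 0` and `pX = 0` is determined by its upper-left `(n-1) × (n-1)` block:
the row sums force its last column, and then `pX = 0` forces its last row because `p_n ≠ 0`.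
The block of `e^{(p)}_{(j,k)}` is the matrix unit `E_{jk}`, so taking the block maps the family
onto the standard basis of `(n-1) × (n-1)` matrices, and every `X` in the subspace is the
combination of the `e^{(p)}_{(j,k)}` with coefficients its own block entries.
-/
def Matrix.submatrixLinearMap {R l m n o : Type*} [Semiring R] (f : l → m) (g : o → n) :
    Matrix m n R →ₗ[R] Matrix l o R where
  toFun A := A.submatrix f g
  map_add' _ _ := rfl
  map_smul' _ _ := rfl

@[simp]
theorem Matrix.submatrixLinearMap_apply {R l m n o : Type*} [Semiring R] (f : l → m) (g : o → n)
    (A : Matrix m n R) : submatrixLinearMap f g A = A.submatrix f g :=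
  rfl

section

variable {m : ℕ} {p : Fin (m + 1) → ℝ}

theorem vecMulVec_mem_annih {u v : Fin (m + 1) → ℝ} (hu : p ⬝ᵥ u = 0)
    (hv : ∑ b, v b = 0) :
    vecMulVec u v ∈ annih m p := by
  refine ⟨?_, ?_⟩
  · simp [vecMulVec_mulVec, dotProduct, hv]
  · rw [vecMul_vecMulVec, hu, zero_smul]

theorem Ep_eq_vecMulVec (j k : Fin m) :
    Ep m p j k = vecMulVec (Pi.single j.castSucc 1 - r m p j • Pi.single (Fin.last m) 1)
      (Pi.single k.castSucc 1 - Pi.single (Fin.last m) 1) := by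
  unfold Ep
  congr 1 <;> funext a <;> simp [Pi.single_apply]

theorem Ep_mem_annih (hp : p (Fin.last m) ≠ 0) (j k : Fin m) : Ep m p j k ∈ annih m p := by
  rw [Ep_eq_vecMulVec]
  refine vecMulVec_mem_annih ?_ ?_
  · simp [dotProduct_sub, r, div_mul_cancel₀ _ hp]
  · simp [Finset.sum_sub_distrib]

theorem submatrix_castSucc_Ep (j k : Fin m) :
    (Ep m p j k).submatrix Fin.castSucc Fin.castSucc = single j k 1 := by
  rw [single_eq_single_vecMulVec_single, Ep_eq_vecMulVec]
  ext i l
  simp [vecMulVec_apply, Pi.single_apply, Fin.castSucc_ne_last]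

theorem eq_zero_of_mem_annih_of_submatrix_castSucc_eq_zero (hp : p (Fin.last m) ≠ 0)
    {X : Matrix (Fin (m + 1)) (Fin (m + 1)) ℝ} (hX : X ∈ annih m p)
    (hX0 : X.submatrix Fin.castSucc Fin.castSucc = 0) : X = 0 := by
  obtain ⟨hrow, hcol⟩ := hX
  have h0 (i l : Fin m) : X i.castSucc l.castSucc = 0 := congrFun (congrFun hX0 i) l
  have hlast (i : Fin m) : X i.castSucc (Fin.last m) = 0 := by
    simpa [mulVec, dotProduct, Fin.sum_univ_castSucc, h0] using congrFun hrow i.castSucc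
  have htop (i : Fin m) (b : Fin (m + 1)) : X i.castSucc b = 0 :=
    Fin.lastCases (hlast i) (h0 i) b
  ext a b
  refine Fin.lastCases ?_ (fun i => htop i b) a
  simpa [vecMul, dotProduct, Fin.sum_univ_castSucc, htop, hp] using congrFun hcol b

theorem submatrixLinearMap_comp_Ep :
    submatrixLinearMap Fin.castSucc Fin.castSucc ∘ (fun jk : Fin m × Fin m => Ep m p jk.1 jk.2)
      = stdBasis ℝ (Fin m) (Fin m) := by
  funext jk
  rw [Function.comp_apply, submatrixLinearMap_apply, submatrix_castSucc_Ep,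
    stdBasis_eq_single]

theorem linearIndependent_Ep :
    LinearIndependent ℝ (fun jk : Fin m × Fin m => Ep m p jk.1 jk.2) :=
  .of_comp (submatrixLinearMap Fin.castSucc Fin.castSucc)
    (submatrixLinearMap_comp_Ep ▸ (stdBasis ℝ (Fin m) (Fin m)).linearIndependent)

theorem span_range_Ep (hp : p (Fin.last m) ≠ 0) :
    Submodule.span ℝ (Set.range (fun jk : Fin m × Fin m => Ep m p jk.1 jk.2)) = annih m p := by
  refine le_antisymm (Submodule.span_le.2 (Set.range_subset_iff.2 fun jk => Ep_mem_annih hp _ _))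
    fun X hX => ?_
  set T := submatrixLinearMap (R := ℝ) (Fin.castSucc (n := m)) Fin.castSucc
  set b := stdBasis ℝ (Fin m) (Fin m)
  have hY : X - ∑ jk, b.repr (T X) jk • Ep m p jk.1 jk.2 = 0 := by
    refine eq_zero_of_mem_annih_of_submatrix_castSucc_eq_zero hp (sub_mem hX
      (Submodule.sum_mem _ fun jk _ => Submodule.smul_mem _ _ (Ep_mem_annih hp _ _))) ?_
    change T _ = 0
    have hTE (jk : Fin m × Fin m) : T (Ep m p jk.1 jk.2) = b jk :=
      congrFun submatrixLinearMap_comp_Ep jk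
    simp only [map_sub, map_sum, map_smul, hTE, Module.Basis.sum_repr, sub_self]
  rw [sub_eq_zero.1 hY]
  exact Submodule.sum_mem _ fun jk _ => Submodule.smul_mem _ _ (Submodule.subset_span ⟨jk, rfl⟩)

end

theorem stmt5_general (m : ℕ) (p : Fin (m + 1) → ℝ)
    (hp : ∀ a, 0 < p a) :
    (∀ j k : Fin m, Ep m p j k ∈ annih m p) ∧
    LinearIndependent ℝ (fun jk : Fin m × Fin m => Ep m p jk.1 jk.2) ∧
    Submodule.span ℝ (Set.range (fun jk : Fin m × Fin m => Ep m p jk.1 jk.2)) = annih m p ∧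
    Module.finrank ℝ (annih m p) = m * m := by
  have hpn : p (Fin.last m) ≠ 0 := (hp _).ne'
  refine ⟨Ep_mem_annih hpn, linearIndependent_Ep, span_range_Ep hpn, ?_⟩
  rw [← span_range_Ep hpn, finrank_span_eq_card linearIndependent_Ep, Fintype.card_prod,
    Fintype.card_fin]

/-- the `(n−1)²` matrices `e^{(p)}_{(j,k)}`, `j, k ∈ [n−1]`, form a basis of
`{X : X1 = 0 and pX = 0}`; in particular each lies in that subspace, the family is
linearly independent, it spans, and the subspace has dimension `(n−1)²`. -/
theorem stmt5 (m : ℕ) (hm : 1 ≤ m) (p : Fin (m + 1) → ℝ)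
    (hp : ∀ a, 0 < p a) (hsum : ∑ a, p a = 1) :
    (∀ j k : Fin m, Ep m p j k ∈ annih m p) ∧
    LinearIndependent ℝ (fun jk : Fin m × Fin m => Ep m p jk.1 jk.2) ∧
    Submodule.span ℝ (Set.range (fun jk : Fin m × Fin m => Ep m p jk.1 jk.2)) = annih m p ∧
    Module.finrank ℝ (annih m p) = m * m :=
  stmt5_general m p hp
end

section
/- For all j, k, ℓ, m ∈ [n−1], the matrix commutator satisfies [e^{(p)}_{(j,k)}, e^{(p)}_{(ℓ,m)}] = (δ_{kℓ} + r_ℓ) e^{(p)}_{(j,m)} − (δ_{mj} + r_j) e^{(p)}_{(ℓ,k)}, where [X,Y] := XY − YX and δ denotes the Kronecker delta. -/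
open Matrix

lemma vmv_mul {n : ℕ} (u v w x : Fin n → ℝ) :
    vecMulVec u v * vecMulVec w x = (v ⬝ᵥ w) • vecMulVec u x := by
  ext i j
  simp [mul_apply, vecMulVec_apply, dotProduct, Finset.mul_sum, Finset.sum_mul]
  congr 1; ext a; ring

/-- `[e^{(p)}_{(j,k)}, e^{(p)}_{(ℓ,m)}] = (δ_{kℓ} + r_ℓ) e^{(p)}_{(j,m)} −
(δ_{mj} + r_j) e^{(p)}_{(ℓ,k)}`, with `[X, Y] := XY − YX`. -/
theorem stmt6 (m : ℕ) (hm : 1 ≤ m) (p : Fin (m + 1) → ℝ)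
    (hp : ∀ a, 0 < p a) (hsum : ∑ a, p a = 1) (j k l mm : Fin m) :
    Ep m p j k * Ep m p l mm - Ep m p l mm * Ep m p j k =
      ((if k = l then (1 : ℝ) else 0) + r m p l) • Ep m p j mm -
        ((if mm = j then (1 : ℝ) else 0) + r m p j) • Ep m p l k := by
  have dotlem : ∀ k l : Fin m,
      (fun b => (if b = k.castSucc then (1:ℝ) else 0) - (if b = Fin.last m then 1 else 0)) ⬝ᵥ
      (fun a => (if a = l.castSucc then (1:ℝ) else 0) -
        r m p l * (if a = Fin.last m then 1 else 0))
      = (if k = l then 1 else 0) + r m p l := by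
    intro k l
    simp [dotProduct, sub_mul, mul_sub, Finset.sum_sub_distrib, Finset.sum_ite_eq',
      Fin.castSucc_inj, (Fin.castSucc_lt_last k).ne, (Fin.castSucc_lt_last l).ne,
      (Fin.castSucc_lt_last k).ne', ite_and, eq_comm]
  simp only [Ep, vmv_mul, dotlem]
end

section
/- For all j, k ∈ [n−1] and all t ∈ ℝ, the matrix exponential satisfies exp(t · e^{(p)}_{(j,k)}) = I + ((e^{t(δ_{jk} + r_j)} − 1)/(δ_{jk} + r_j)) · e^{(p)}_{(j,k)}, where δ denotes the Kronecker delta and I the n×n identity matrix. -/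
open Matrix

/-! Since `E := e^{(p)}_{(j,k)}` has rank one, `E² = c • E` with `c = (e_k − e_n)ᵀ(e_j − r_j e_n)
= δ_{jk} + r_j > 0`. Hence `P := c⁻¹ • E` is idempotent, and on the decomposition `1 = P + (1 − P)`
the exponential acts coordinatewise: `exp (s • P) = e^s • P + (1 − P) = 1 + (e^s − 1) • P`. -/

open NormedSpace Nat

theorem IsIdempotentElem.smul_add_smul_one_sub_pow {𝕂 𝔸 : Type*} [CommSemiring 𝕂] [Ring 𝔸]
    [Algebra 𝕂 𝔸] {P : 𝔸} (hP : IsIdempotentElem P) (a b : 𝕂) (n : ℕ) :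
    (a • P + b • (1 - P)) ^ n = a ^ n • P + b ^ n • (1 - P) := by
  have hQ : (1 - P) * (1 - P) = 1 - P := hP.one_sub
  have hPQ : P * (1 - P) = 0 := by rw [mul_sub, mul_one, hP.eq, sub_self]
  have hQP : (1 - P) * P = 0 := by rw [sub_mul, one_mul, hP.eq, sub_self]
  induction n with
  | zero => simp
  | succ n ih =>
    rw [pow_succ, ih]
    simp only [add_mul, mul_add, smul_mul_smul, hP.eq, hQ, hPQ, hQP, smul_zero, add_zero,
      zero_add, pow_succ]

section Exp

variable {𝕂 𝔸 : Type*} [RCLike 𝕂] [NormedRing 𝔸] [NormedAlgebra 𝕂 𝔸] [CompleteSpace 𝔸]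

theorem IsIdempotentElem.exp_smul_add_smul_one_sub {P : 𝔸} (hP : IsIdempotentElem P) (a b : 𝕂) :
    exp (a • P + b • (1 - P)) = exp a • P + exp b • (1 - P) := by
  have hseries : HasSum
      (fun n ↦ ((n ! : 𝕂)⁻¹ • a ^ n) • P + ((n ! : 𝕂)⁻¹ • b ^ n) • (1 - P))
      (exp a • P + exp b • (1 - P)) :=
    ((exp_series_hasSum_exp' a).smul_const P).add ((exp_series_hasSum_exp' b).smul_const _)
  refine (exp_series_hasSum_exp' (𝕂 := 𝕂) (a • P + b • (1 - P))).unique ?_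
  simp only [hP.smul_add_smul_one_sub_pow, smul_add, smul_smul]
  exact hseries

theorem IsIdempotentElem.exp_smul {P : 𝔸} (hP : IsIdempotentElem P) (a : 𝕂) :
    exp (a • P) = 1 + (exp a - 1) • P := by
  rw [sub_smul, one_smul, ← add_sub_assoc, add_comm, add_sub_assoc]
  simpa [exp_zero] using hP.exp_smul_add_smul_one_sub a 0

theorem exp_smul_of_mul_self_eq_smul {A : 𝔸} {c : 𝕂} (hc : c ≠ 0) (hA : A * A = c • A) (t : 𝕂) :
    exp (t • A) = 1 + ((exp (t * c) - 1) / c) • A := by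
  have hP : IsIdempotentElem (c⁻¹ • A) := by
    rw [IsIdempotentElem, smul_mul_smul, hA, smul_smul, mul_assoc, inv_mul_cancel₀ hc, mul_one]
  rw [show t • A = (t * c) • (c⁻¹ • A) by rw [smul_smul, mul_assoc, mul_inv_cancel₀ hc, mul_one],
    hP.exp_smul, smul_smul, div_eq_mul_inv]

end Exp

theorem r_pos {m : ℕ} {p : Fin (m + 1) → ℝ} (hp : ∀ a, 0 < p a) (j : Fin m) : 0 < r m p j :=
  div_pos (hp _) (hp _)

theorem Ep_mul_self (m : ℕ) (p : Fin (m + 1) → ℝ) (j k : Fin m) :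
    Ep m p j k * Ep m p j k = ((if j = k then (1 : ℝ) else 0) + r m p j) • Ep m p j k := by
  have hk : (k.castSucc : Fin (m + 1)) ≠ Fin.last m := (Fin.castSucc_lt_last k).ne
  have hj : (j.castSucc : Fin (m + 1)) ≠ Fin.last m := (Fin.castSucc_lt_last j).ne
  rw [Ep, vecMulVec_mul_vecMulVec, vecMulVec_smul]
  congr 2
  simp only [dotProduct, sub_mul, mul_sub, Finset.sum_sub_distrib, ite_mul, mul_ite, one_mul,
    mul_one, zero_mul, mul_zero, Finset.sum_ite_eq', Finset.mem_univ, if_true]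
  simp [hk, hj, Fin.castSucc_inj, eq_comm]

open NormedSpace in
theorem stmt7_general (m : ℕ) (p : Fin (m + 1) → ℝ)
    (hp : ∀ a, 0 < p a) (j k : Fin m) (t : ℝ) :
    exp (t • Ep m p j k) =
      (1 : Matrix (Fin (m + 1)) (Fin (m + 1)) ℝ) +
        ((Real.exp (t * ((if j = k then (1 : ℝ) else 0) + r m p j)) - 1) /
            ((if j = k then (1 : ℝ) else 0) + r m p j)) • Ep m p j k := by
  -- `exp` depends only on the topology, so any submultiplicative norm may be used
  let _ := Matrix.linftyOpNormedRing (n := Fin (m + 1)) (α := ℝ)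
  let _ := Matrix.linftyOpNormedAlgebra (n := Fin (m + 1)) (R := ℝ) (α := ℝ)
  have hc : (if j = k then (1 : ℝ) else 0) + r m p j ≠ 0 := by
    have := r_pos hp j
    positivity
  rw [Real.exp_eq_exp_ℝ]
  exact exp_smul_of_mul_self_eq_smul hc (Ep_mul_self m p j k) t

open NormedSpace in
/-- `exp(t · e^{(p)}_{(j,k)}) = I + ((e^{t(δ_{jk} + r_j)} − 1)/(δ_{jk} + r_j)) ·
e^{(p)}_{(j,k)}`. -/
theorem stmt7 (m : ℕ) (hm : 1 ≤ m) (p : Fin (m + 1) → ℝ)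
    (hp : ∀ a, 0 < p a) (hsum : ∑ a, p a = 1) (j k : Fin m) (t : ℝ) :
    exp (t • Ep m p j k) =
      (1 : Matrix (Fin (m + 1)) (Fin (m + 1)) ℝ) +
        ((Real.exp (t * ((if j = k then (1 : ℝ) else 0) + r m p j)) - 1) /
            ((if j = k then (1 : ℝ) else 0) + r m p j)) • Ep m p j k :=
  stmt7_general m p hp j k t
end

section
/- If t_1, …, t_{n−1} are nonnegative real numbers, then the matrix exponential exp(−Σ_{j=1}^{n−1} t_j · e^{(p)}_{(j,j)}) belongs to ⟨p⟩^+, i.e., it is entrywise nonnegative, its rows sum to 1, and it leaves p invariant under left multiplication by the row vector p. -/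
open Matrix

/-!
A matrix `Q` with nonnegative off-diagonal entries has an entrywise nonnegative exponential:
for `c` large, `Q + c • 1` is entrywise nonnegative, hence so is every term of its exponential
series, and `exp Q = e^{-c} • exp (Q + c • 1)`. Each `e^{(p)}_{(j,j)}` has nonpositive
off-diagonal entries, kills `1` from the right (`e_j - e_n` has coordinate sum `0`) and `p` from
the left (`p (e_j - r_j e_n) = p_j - r_j p_n = 0`), so `Q = -∑ t_j e^{(p)}_{(j,j)}` has all three
properties; and a vector killed by a matrix is fixed by its exponential, because every term of
the series beyond the constant one kills it.
-/

open NormedSpace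
open scoped Nat

namespace Matrix

variable {n : Type*} [Fintype n] [DecidableEq n]

theorem hasSum_exp (M : Matrix n n ℝ) :
    HasSum (fun k => (k ! : ℝ)⁻¹ • M ^ k) (exp M) := by
  let := Matrix.linftyOpNormedRing (n := n) (α := ℝ)
  let := Matrix.linftyOpNormedAlgebra (n := n) (R := ℝ) (α := ℝ)
  exact exp_series_hasSum_exp' M

theorem exp_apply_nonneg {M : Matrix n n ℝ} (hM : ∀ i j, 0 ≤ M i j) (i j : n) :
    0 ≤ exp M i j :=
  (Pi.hasSum.mp (Pi.hasSum.mp (hasSum_exp M) i) j).nonneg fun k =>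
    mul_nonneg (by positivity) (pow_apply_nonneg hM k i j)

theorem exp_smul_one (c : ℝ) : exp (c • (1 : Matrix n n ℝ)) = Real.exp c • 1 := by
  rw [smul_one_eq_diagonal, exp_diagonal, smul_one_eq_diagonal, Pi.exp_def, Real.exp_eq_exp_ℝ]

theorem exp_apply_nonneg_of_offDiag_nonneg {M : Matrix n n ℝ}
    (hM : ∀ i j, i ≠ j → 0 ≤ M i j) (i j : n) : 0 ≤ exp M i j := by
  set c := ∑ k, |M k k|
  have hshift : ∀ i j, 0 ≤ (M + c • 1) i j := by
    intro i j
    rcases eq_or_ne i j with rfl | hij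
    · have : |M i i| ≤ c :=
        Finset.single_le_sum (fun k _ => abs_nonneg (M k k)) (Finset.mem_univ i)
      simp only [add_apply, smul_apply, one_apply_eq, smul_eq_mul, mul_one]
      linarith [neg_abs_le (M i i)]
    · simp [hij, hM i j hij]
  have hexp : exp M = Real.exp (-c) • exp (M + c • 1) := by
    rw [← smul_one_mul, ← exp_smul_one,
      ← exp_add_of_commute _ _ ((Commute.one_left _).smul_left _)]
    congr 1
    module
  rw [hexp]
  exact mul_nonneg (Real.exp_pos _).le (exp_apply_nonneg hshift i j)

theorem exp_mulVec_eq_self {B : Matrix n n ℝ} {w : n → ℝ} (h : B *ᵥ w = 0) :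
    exp B *ᵥ w = w := by
  have hterm : ∀ k, ((k ! : ℝ)⁻¹ • B ^ k) *ᵥ w = if k = 0 then w else 0 := by
    rintro (_ | k)
    · simp
    · rw [smul_mulVec, pow_succ, ← mulVec_mulVec, h, mulVec_zero, smul_zero,
        if_neg k.succ_ne_zero]
  have hmap : HasSum (fun k => ((k ! : ℝ)⁻¹ • B ^ k) *ᵥ w) (exp B *ᵥ w) :=
    (hasSum_exp B).map (mulVec.addMonoidHomLeft w) (continuous_id.matrix_mulVec continuous_const)
  simp only [hterm] at hmap
  exact hmap.unique (hasSum_ite_eq 0 w)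

theorem vecMul_exp_eq_self {B : Matrix n n ℝ} {w : n → ℝ} (h : w ᵥ* B = 0) :
    w ᵥ* exp B = w := by
  rw [← mulVec_transpose, ← exp_transpose]
  exact exp_mulVec_eq_self (by rwa [mulVec_transpose])

end Matrix

theorem Ep_mulVec_one (m : ℕ) (p : Fin (m + 1) → ℝ) (j k : Fin m) : Ep m p j k *ᵥ 1 = 0 := by
  rw [Ep, vecMulVec_mulVec]
  simp [dotProduct, Finset.sum_sub_distrib]

theorem vecMul_Ep {m : ℕ} {p : Fin (m + 1) → ℝ} (hp : p (Fin.last m) ≠ 0) (j k : Fin m) :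
    p ᵥ* Ep m p j k = 0 := by
  have hpu : p ⬝ᵥ (fun a => (if a = j.castSucc then (1 : ℝ) else 0) -
      r m p j * (if a = Fin.last m then (1 : ℝ) else 0)) = 0 := by
    simp [dotProduct, mul_sub, Finset.sum_sub_distrib, r, mul_div_cancel₀ _ hp]
  rw [Ep, vecMul_vecMulVec, hpu, zero_smul]

theorem Ep_apply_nonpos_of_ne {m : ℕ} {p : Fin (m + 1) → ℝ} (hp : ∀ a, 0 ≤ p a) (j : Fin m)
    {a b : Fin (m + 1)} (hab : a ≠ b) : Ep m p j j a b ≤ 0 := by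
  have hr : 0 ≤ r m p j := div_nonneg (hp _) (hp _)
  have hj : j.castSucc ≠ Fin.last m := (Fin.castSucc_lt_last j).ne
  simp only [Ep, vecMulVec_apply]
  split_ifs <;> simp_all

open NormedSpace in
theorem stmt8_general (m : ℕ) (p : Fin (m + 1) → ℝ)
    (hp : ∀ a, 0 < p a) (t : Fin m → ℝ) (ht : ∀ j, 0 ≤ t j) :
    (∀ a b, 0 ≤ exp (-(∑ j, t j • Ep m p j j)) a b) ∧
    (exp (-(∑ j, t j • Ep m p j j))).mulVec (fun _ => (1 : ℝ)) = (fun _ => (1 : ℝ)) ∧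
    Matrix.vecMul p (exp (-(∑ j, t j • Ep m p j j))) = p := by
  set Q := -(∑ j, t j • Ep m p j j)
  have hQ_offDiag : ∀ a b, a ≠ b → 0 ≤ Q a b := by
    intro a b hab
    simp only [Q, Matrix.neg_apply, Matrix.sum_apply, Matrix.smul_apply, smul_eq_mul, neg_nonneg]
    exact Finset.sum_nonpos fun j _ =>
      mul_nonpos_of_nonneg_of_nonpos (ht j) (Ep_apply_nonpos_of_ne (fun a => (hp a).le) j hab)
  have hQ_one : Q *ᵥ 1 = 0 := by
    simp [Q, neg_mulVec, sum_mulVec, smul_mulVec, Ep_mulVec_one]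
  have hp_Q : p ᵥ* Q = 0 := by
    simp [Q, vecMul_neg, vecMul_sum, vecMul_smul, vecMul_Ep (hp _).ne']
  exact ⟨exp_apply_nonneg_of_offDiag_nonneg hQ_offDiag, exp_mulVec_eq_self hQ_one,
    vecMul_exp_eq_self hp_Q⟩

open NormedSpace in
/-- if `t_j ≥ 0` for all `j`, then `exp(−Σ_j t_j e^{(p)}_{(j,j)}) ∈ ⟨p⟩⁺`:
it is entrywise nonnegative, its rows sum to `1`, and `p` is invariant under left
multiplication. -/
theorem stmt8 (m : ℕ) (hm : 1 ≤ m) (p : Fin (m + 1) → ℝ)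
    (hp : ∀ a, 0 < p a) (hsum : ∑ a, p a = 1) (t : Fin m → ℝ) (ht : ∀ j, 0 ≤ t j) :
    (∀ a b, 0 ≤ exp (-(∑ j, t j • Ep m p j j)) a b) ∧
    (exp (-(∑ j, t j • Ep m p j j))).mulVec (fun _ => (1 : ℝ)) = (fun _ => (1 : ℝ)) ∧
    Matrix.vecMul p (exp (-(∑ j, t j • Ep m p j j))) = p :=
  stmt8_general m p hp t ht
end

section
/- For every j ∈ [n−1] and every t ≥ 0, the matrix P := exp(−t · e^{(p)}_{(j,j)}) satisfies detailed balance with respect to p: p_a P_{ab} = p_b P_{ba} for all a, b ∈ [n]. In particular p_j P_{jn} = p_n P_{nj}. -/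
/-! A weight vector `p` and a matrix `A` satisfy detailed balance when `diagonal p * A`
is symmetric, i.e. when `diagonal p` semiconjugates `A` to `Aᵀ`. Semiconjugacy passes to every
power and hence to the exponential series, so `exp A` again satisfies detailed balance. The
generator `-t • e^{(p)}_{(j,j)}` does because it is a multiple of the rank-one matrix `u vᵀ`
whose left factor is proportional to `v` after weighting by `p`: `p_a u_a = p_j v_a`. -/

open Matrix

section DetailedBalance

variable {ι R : Type*}

def DetailedBalance [Mul R] (p : ι → R) (A : Matrix ι ι R) : Prop :=
  ∀ a b, p a * A a b = p b * A b a

theorem detailedBalance_iff_semiconjBy [Fintype ι] [DecidableEq ι] [CommRing R] {p : ι → R}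
    {A : Matrix ι ι R} : DetailedBalance p A ↔ SemiconjBy (diagonal p) A Aᵀ := by
  simp only [DetailedBalance, SemiconjBy, ← Matrix.ext_iff, diagonal_mul, mul_diagonal,
    transpose_apply]
  exact forall₂_congr fun a b => by rw [mul_comm (A b a)]

theorem DetailedBalance.smul [CommRing R] {p : ι → R} {A : Matrix ι ι R}
    (h : DetailedBalance p A) (c : R) : DetailedBalance p (c • A) := fun a b => by
  simp only [Matrix.smul_apply, smul_eq_mul, mul_left_comm (p _), h a b]

theorem DetailedBalance.neg [CommRing R] {p : ι → R} {A : Matrix ι ι R}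
    (h : DetailedBalance p A) : DetailedBalance p (-A) := fun a b => by
  simp only [Matrix.neg_apply, mul_neg, h a b]

theorem DetailedBalance.exp [Fintype ι] [DecidableEq ι] [NormedCommRing R] [NormedAlgebra ℚ R]
    [CompleteSpace R] {p : ι → R} {A : Matrix ι ι R} (h : DetailedBalance p A) :
    DetailedBalance p (NormedSpace.exp A) := by
  rw [detailedBalance_iff_semiconjBy, ← Matrix.exp_transpose] at *
  -- Instance search does not identify the completeness of the operator-norm uniformity with
  -- that of the product uniformity on `ι → ι → R`; the two agree definitionally.
  open scoped Norms.Operator in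
  exact @SemiconjBy.exp_right _ _ _ (by exact (inferInstance : CompleteSpace (ι → ι → R))) _ _ _ h

theorem detailedBalance_vecMulVec [CommRing R] {p u v : ι → R} (c : R)
    (h : ∀ a, p a * u a = c * v a) : DetailedBalance p (vecMulVec u v) := fun a b => by
  simp only [vecMulVec_apply]
  calc p a * (u a * v b) = c * v a * v b := by rw [← mul_assoc, h a]
    _ = p b * (u b * v a) := by rw [← mul_assoc, h b]; ring

end DetailedBalance

theorem detailedBalance_Ep {m : ℕ} {p : Fin (m + 1) → ℝ} (hpn : p (Fin.last m) ≠ 0)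
    (j : Fin m) : DetailedBalance p (Ep m p j j) := by
  refine detailedBalance_vecMulVec (p j.castSucc) fun a => ?_
  have hjn : j.castSucc ≠ Fin.last m := (Fin.castSucc_lt_last j).ne
  rcases eq_or_ne a j.castSucc with rfl | haj
  · simp [hjn]
  rcases eq_or_ne a (Fin.last m) with rfl | han
  · simp [haj, r, mul_div_cancel₀ _ hpn]
  · simp [haj, han]

open NormedSpace in
theorem stmt10_general (m : ℕ) (p : Fin (m + 1) → ℝ)
    (hp : ∀ a, 0 < p a) (j : Fin m) (t : ℝ) :
    (∀ a b, p a * NormedSpace.exp (-(t • Ep m p j j)) a b = p b * NormedSpace.exp (-(t • Ep m p j j)) b a) ∧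
    p j.castSucc * NormedSpace.exp (-(t • Ep m p j j)) j.castSucc (Fin.last m) =
      p (Fin.last m) * NormedSpace.exp (-(t • Ep m p j j)) (Fin.last m) j.castSucc := by
  have h : DetailedBalance p (NormedSpace.exp (-(t • Ep m p j j))) :=
    ((detailedBalance_Ep (hp _).ne' j).smul t).neg.exp
  exact ⟨h, h _ _⟩

open NormedSpace in
/-- for `t ≥ 0`, `P := exp(−t e^{(p)}_{(j,j)})` satisfies detailed balance
with respect to `p`: `p_a P_{ab} = p_b P_{ba}` for all `a, b`; in particular
`p_j P_{jn} = p_n P_{nj}`. -/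
theorem stmt10 (m : ℕ) (hm : 1 ≤ m) (p : Fin (m + 1) → ℝ)
    (hp : ∀ a, 0 < p a) (hsum : ∑ a, p a = 1) (j : Fin m) (t : ℝ) (ht : 0 ≤ t) :
    (∀ a b, p a * NormedSpace.exp (-(t • Ep m p j j)) a b = p b * NormedSpace.exp (-(t • Ep m p j j)) b a) ∧
    p j.castSucc * NormedSpace.exp (-(t • Ep m p j j)) j.castSucc (Fin.last m) =
      p (Fin.last m) * NormedSpace.exp (-(t • Ep m p j j)) (Fin.last m) j.castSucc :=
  stmt10_general m p hp j t
end

section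
/- For any d×d real matrices α and β, the n×n matrices satisfy α^{(p)}_{(𝒥)} · β^{(p)}_{(𝒥)} = γ^{(p)}_{(𝒥)} where γ := α (I_d + 1_d r_{(𝒥)}) β. Consequently, if γ^{(p)}_{(𝒥)} = α^{(p)}_{(𝒥)} β^{(p)}_{(𝒥)} for a d×d matrix γ, then γ = α (I_d + 1_d r_{(𝒥)}) β. -/
open Matrix

/-- For a `d`-element subset `𝒥 = {j_1, …, j_d} ⊆ [n-1]` (given as an injective tuple
`J : Fin d → Fin m`) and a `d × d` matrix `μ`, the `n × n` matrix
`μ^{(p)}_{(𝒥)} := Σ_{u,v} μ_{uv} e^{(p)}_{(j_u, j_v)}`. -/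
noncomputable def liftJ (m d : ℕ) (p : Fin (m + 1) → ℝ) (J : Fin d → Fin m)
    (μ : Matrix (Fin d) (Fin d) ℝ) : Matrix (Fin (m + 1)) (Fin (m + 1)) ℝ :=
  ∑ u, ∑ v, μ u v • Ep m p (J u) (J v)


noncomputable def Fmat (m d : ℕ) (p : Fin (m + 1) → ℝ) (J : Fin d → Fin m) :
    Matrix (Fin (m + 1)) (Fin d) ℝ :=
  Matrix.of fun a u => (if a = (J u).castSucc then (1 : ℝ) else 0) -
      r m p (J u) * (if a = Fin.last m then (1 : ℝ) else 0)

noncomputable def Gmat (m d : ℕ) (J : Fin d → Fin m) :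
    Matrix (Fin d) (Fin (m + 1)) ℝ :=
  Matrix.of fun v b => (if b = (J v).castSucc then (1 : ℝ) else 0) -
      (if b = Fin.last m then (1 : ℝ) else 0)

lemma liftJ_eq (m d : ℕ) (p : Fin (m + 1) → ℝ) (J : Fin d → Fin m)
    (μ : Matrix (Fin d) (Fin d) ℝ) :
    liftJ m d p J μ = Fmat m d p J * μ * Gmat m d J := by
  ext a b
  simp only [liftJ, Matrix.sum_apply, Matrix.smul_apply, Ep, vecMulVec_apply, smul_eq_mul,
    Matrix.mul_apply, Finset.sum_mul, Fmat, Gmat, Matrix.of_apply]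
  rw [Finset.sum_comm]
  refine Finset.sum_congr rfl fun u _ => Finset.sum_congr rfl fun v _ => ?_
  ring

lemma gf_dot (m : ℕ) (p : Fin (m+1) → ℝ) (k j' : Fin m) :
    (fun b => (if b = k.castSucc then (1:ℝ) else 0) - (if b = Fin.last m then 1 else 0)) ⬝ᵥ
    (fun a => (if a = j'.castSucc then (1:ℝ) else 0) - r m p j' * (if a = Fin.last m then 1 else 0))
    = (if k = j' then 1 else 0) + r m p j' := by
  have hk : (k.castSucc : Fin (m+1)) ≠ Fin.last m := (Fin.castSucc_lt_last _).ne
  have hj : (j'.castSucc : Fin (m+1)) ≠ Fin.last m := (Fin.castSucc_lt_last _).ne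
  simp only [dotProduct, sub_mul, mul_sub, ite_mul, one_mul, zero_mul, mul_ite, mul_one, mul_zero,
    Finset.sum_sub_distrib, Finset.sum_ite_eq', Finset.mem_univ, if_true]
  simp [hk, hj, Fin.castSucc_inj, eq_comm]

lemma GF (m d : ℕ) (p : Fin (m + 1) → ℝ) (J : Fin d → Fin m) (hJ : Function.Injective J) :
    Gmat m d J * Fmat m d p J =
      (1 : Matrix (Fin d) (Fin d) ℝ) +
        Matrix.vecMulVec (fun _ => (1 : ℝ)) (fun v => r m p (J v)) := by
  ext v u
  have := gf_dot m p (J v) (J u)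
  simp only [dotProduct] at this
  simp only [Matrix.mul_apply, Gmat, Fmat, Matrix.of_apply, Matrix.add_apply, Matrix.one_apply,
    vecMulVec_apply, one_mul]
  rw [this]
  simp [hJ.eq_iff]

lemma liftJ_apply (m d : ℕ) (p : Fin (m + 1) → ℝ) (J : Fin d → Fin m)
    (hJ : Function.Injective J) (μ : Matrix (Fin d) (Fin d) ℝ) (u v : Fin d) :
    liftJ m d p J μ (J u).castSucc (J v).castSucc = μ u v := by
  simp only [liftJ, Matrix.sum_apply, Matrix.smul_apply, Ep, vecMulVec_apply, smul_eq_mul]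
  have h1 : ((J u).castSucc : Fin (m+1)) ≠ Fin.last m := (Fin.castSucc_lt_last _).ne
  have h2 : ((J v).castSucc : Fin (m+1)) ≠ Fin.last m := (Fin.castSucc_lt_last _).ne
  simp [h1, h2, Fin.castSucc_inj, hJ.eq_iff, Finset.sum_ite_eq, Finset.sum_ite_eq']

/-- `α^{(p)}_{(𝒥)} · β^{(p)}_{(𝒥)} = (α (I_d + 1_d r_{(𝒥)}) β)^{(p)}_{(𝒥)}`;
consequently if `γ^{(p)}_{(𝒥)} = α^{(p)}_{(𝒥)} β^{(p)}_{(𝒥)}` then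
`γ = α (I_d + 1_d r_{(𝒥)}) β`. -/
theorem stmt12 (m d : ℕ) (hm : 1 ≤ m) (hd : 1 ≤ d) (p : Fin (m + 1) → ℝ)
    (hp : ∀ a, 0 < p a) (hsum : ∑ a, p a = 1)
    (J : Fin d → Fin m) (hJ : Function.Injective J)
    (α β : Matrix (Fin d) (Fin d) ℝ) :
    liftJ m d p J α * liftJ m d p J β =
      liftJ m d p J
        (α * ((1 : Matrix (Fin d) (Fin d) ℝ) +
          Matrix.vecMulVec (fun _ => (1 : ℝ)) (fun v => r m p (J v))) * β) ∧
    ∀ γ : Matrix (Fin d) (Fin d) ℝ,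
      liftJ m d p J γ = liftJ m d p J α * liftJ m d p J β →
      γ = α * ((1 : Matrix (Fin d) (Fin d) ℝ) +
          Matrix.vecMulVec (fun _ => (1 : ℝ)) (fun v => r m p (J v))) * β := by
  have h1 : liftJ m d p J α * liftJ m d p J β =
      liftJ m d p J
        (α * ((1 : Matrix (Fin d) (Fin d) ℝ) +
          Matrix.vecMulVec (fun _ => (1 : ℝ)) (fun v => r m p (J v))) * β) := by
    rw [liftJ_eq, liftJ_eq, liftJ_eq, ← GF m d p J hJ]
    simp only [Matrix.mul_assoc]
  refine ⟨h1, fun γ hγ => ?_⟩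
  rw [h1] at hγ
  ext u v
  have := congrArg (fun M => M (J u).castSucc (J v).castSucc) hγ
  simpa [liftJ_apply m d p J hJ] using this
end

section
/- For every ω ∈ ℝ and every i ∈ ℕ, the matrix A^{(p;ω)}_{(𝒥)} satisfies (A^{(p;ω)}_{(𝒥)})^{i+1} = ω^i · A^{(p;ω)}_{(𝒥)}. -/
open Matrix

/-- The matrix `A^{(p;ω)}_{(𝒥)} := ω Σ_{u,v} (δ_{j_u j_v} − r_{j_v}/(1 + r_{(𝒥)} 1_d))
e^{(p)}_{(j_u, j_v)}`. -/
noncomputable def AJ (m d : ℕ) (p : Fin (m + 1) → ℝ) (J : Fin d → Fin m) (ω : ℝ) :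
    Matrix (Fin (m + 1)) (Fin (m + 1)) ℝ :=
  ω • ∑ u, ∑ v,
    ((if J u = J v then (1 : ℝ) else 0) - r m p (J v) / (1 + ∑ w, r m p (J w))) •
      Ep m p (J u) (J v)


/-!
`liftJ μ` factors as `X μ Y`, where `X` has columns `e_{j_u} − r_{j_u} e_n` and `Y` has rows
`e_{j_v}ᵀ − e_nᵀ`, so `A = ω • X μ Y` for `μ = (δ_{uv} − r_{j_v}/(1 + r_{(𝒥)}1_d))`.
Since `Y X = 1 + 1_d r_{(𝒥)}` and `μ` is exactly its Sherman–Morrison inverse,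
`A² = ω² • X μ (Y X) μ Y = ω • A`.
-/

theorem pow_succ_eq_pow_smul_of_mul_self_eq_smul {R A : Type*} [CommSemiring R] [Semiring A]
    [Module R A] [IsScalarTower R A A] [SMulCommClass R A A] {a : A} {c : R}
    (h : a * a = c • a) (i : ℕ) : a ^ (i + 1) = c ^ i • a := by
  induction i with
  | zero => simp
  | succ i ih => rw [pow_succ, ih, smul_mul_assoc, h, smul_smul, pow_succ]

theorem Matrix.one_sub_smul_vecMulVec_mul_one_add_vecMulVec {n K : Type*} [Fintype n]
    [DecidableEq n] [Field K] (a b : n → K) (h : 1 + b ⬝ᵥ a ≠ 0) :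
    (1 - (1 + b ⬝ᵥ a)⁻¹ • vecMulVec a b) * (1 + vecMulVec a b) = 1 := by
  have hcoeff : 1 - (1 + b ⬝ᵥ a)⁻¹ - (1 + b ⬝ᵥ a)⁻¹ * b ⬝ᵥ a = 0 := by field_simp; ring
  calc _ = 1 + (1 - (1 + b ⬝ᵥ a)⁻¹ - (1 + b ⬝ᵥ a)⁻¹ * b ⬝ᵥ a) • vecMulVec a b := by
        rw [sub_mul, one_mul, mul_add, mul_one, smul_mul_assoc, vecMulVec_mul_vecMulVec,
          vecMulVec_smul, smul_smul]
        module
    _ = 1 := by rw [hcoeff, zero_smul, add_zero]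

noncomputable def liftJLeft (m d : ℕ) (p : Fin (m + 1) → ℝ) (J : Fin d → Fin m) :
    Matrix (Fin (m + 1)) (Fin d) ℝ :=
  of fun a u => (if a = (J u).castSucc then (1 : ℝ) else 0) -
    r m p (J u) * (if a = Fin.last m then (1 : ℝ) else 0)

def liftJRight (m d : ℕ) (J : Fin d → Fin m) : Matrix (Fin d) (Fin (m + 1)) ℝ :=
  of fun v b => (if b = (J v).castSucc then (1 : ℝ) else 0) -
    (if b = Fin.last m then (1 : ℝ) else 0)

noncomputable def coeffAJ (m d : ℕ) (p : Fin (m + 1) → ℝ) (J : Fin d → Fin m) :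
    Matrix (Fin d) (Fin d) ℝ :=
  1 - (1 + (r m p ∘ J) ⬝ᵥ 1)⁻¹ • vecMulVec 1 (r m p ∘ J)

theorem liftJ_eq_liftJLeft_mul_mul_liftJRight (m d : ℕ) (p : Fin (m + 1) → ℝ)
    (J : Fin d → Fin m) (μ : Matrix (Fin d) (Fin d) ℝ) :
    liftJ m d p J μ = liftJLeft m d p J * μ * liftJRight m d J := by
  ext a b
  simp only [liftJ, Ep, Matrix.sum_apply, Matrix.smul_apply, vecMulVec_apply, mul_apply, liftJLeft,
    liftJRight, of_apply, Finset.sum_mul, smul_eq_mul]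
  rw [Finset.sum_comm]
  exact Finset.sum_congr rfl fun v _ => Finset.sum_congr rfl fun u _ => by ring

theorem liftJRight_mul_liftJLeft (m d : ℕ) (p : Fin (m + 1) → ℝ) {J : Fin d → Fin m}
    (hJ : Function.Injective J) :
    liftJRight m d J * liftJLeft m d p J = 1 + vecMulVec 1 (r m p ∘ J) := by
  ext v u
  have hne : ∀ j : Fin m, j.castSucc ≠ Fin.last m := fun j => (Fin.castSucc_lt_last j).ne
  simp [mul_apply, liftJRight, liftJLeft, one_apply, hJ.eq_iff, sub_mul, mul_sub, ite_mul,
    Finset.sum_sub_distrib, hne, (hne _).symm, eq_comm]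

theorem coeffAJ_mul_liftJRight_mul_liftJLeft (m d : ℕ) {p : Fin (m + 1) → ℝ}
    (hp : ∀ a, 0 < p a) {J : Fin d → Fin m} (hJ : Function.Injective J) :
    coeffAJ m d p J * (liftJRight m d J * liftJLeft m d p J) = 1 := by
  have hρ : 1 + (r m p ∘ J) ⬝ᵥ 1 ≠ 0 := by
    rw [dotProduct_one]
    exact (add_pos_of_pos_of_nonneg one_pos
      (Finset.sum_nonneg fun w _ => (div_pos (hp _) (hp _)).le)).ne'
  rw [liftJRight_mul_liftJLeft m d p hJ]
  exact one_sub_smul_vecMulVec_mul_one_add_vecMulVec _ _ hρ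

theorem AJ_eq_smul_liftJ_coeffAJ (m d : ℕ) (p : Fin (m + 1) → ℝ) {J : Fin d → Fin m}
    (hJ : Function.Injective J) (ω : ℝ) : AJ m d p J ω = ω • liftJ m d p J (coeffAJ m d p J) := by
  simp only [AJ, liftJ, coeffAJ, dotProduct_one, hJ.eq_iff, Matrix.sub_apply, one_apply,
    Matrix.smul_apply, vecMulVec_apply, Pi.one_apply, one_mul, Function.comp_apply, smul_eq_mul,
    div_eq_inv_mul]

theorem AJ_mul_self (m d : ℕ) {p : Fin (m + 1) → ℝ} (hp : ∀ a, 0 < p a) {J : Fin d → Fin m}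
    (hJ : Function.Injective J) (ω : ℝ) : AJ m d p J ω * AJ m d p J ω = ω • AJ m d p J ω := by
  have hμ := coeffAJ_mul_liftJRight_mul_liftJLeft m d hp hJ
  rw [AJ_eq_smul_liftJ_coeffAJ m d p hJ, liftJ_eq_liftJLeft_mul_mul_liftJRight, smul_mul_smul_comm,
    mul_smul]
  generalize liftJLeft m d p J = X, liftJRight m d J = Y, coeffAJ m d p J = μ at hμ ⊢
  calc ω • ω • (X * μ * Y * (X * μ * Y)) = ω • ω • (X * (μ * (Y * X)) * μ * Y) := by
        simp only [Matrix.mul_assoc]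
    _ = ω • ω • (X * μ * Y) := by rw [hμ, Matrix.mul_one]

theorem stmt13_general (m d : ℕ) (p : Fin (m + 1) → ℝ)
    (hp : ∀ a, 0 < p a)
    (J : Fin d → Fin m) (hJ : Function.Injective J) (ω : ℝ) (i : ℕ) :
    (AJ m d p J ω) ^ (i + 1) = ω ^ i • AJ m d p J ω :=
  pow_succ_eq_pow_smul_of_mul_self_eq_smul (AJ_mul_self m d hp hJ ω) i

/-- `(A^{(p;ω)}_{(𝒥)})^{i+1} = ω^i · A^{(p;ω)}_{(𝒥)}` for all `i ∈ ℕ`. -/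
theorem stmt13 (m d : ℕ) (hm : 1 ≤ m) (hd : 1 ≤ d) (p : Fin (m + 1) → ℝ)
    (hp : ∀ a, 0 < p a) (hsum : ∑ a, p a = 1)
    (J : Fin d → Fin m) (hJ : Function.Injective J) (ω : ℝ) (i : ℕ) :
    (AJ m d p J ω) ^ (i + 1) = ω ^ i • AJ m d p J ω :=
  stmt13_general m d p hp J hJ ω i
end

section
/- The Barker matrix 𝓑^{(p)}_{(𝒥)} := I − ω^{−1} A^{(p;ω)}_{(𝒥)} does not depend on ω ≠ 0 (it equals I − A^{(p;1)}_{(𝒥)}), belongs to ⟨p⟩^+, and its entries in row n satisfy (𝓑^{(p)}_{(𝒥)})_{n, j_u} = r_{j_u}/(1 + r_{(𝒥)}1_d) for each u ∈ {1,…,d} and (𝓑^{(p)}_{(𝒥)})_{n,n} = 1/(1 + r_{(𝒥)}1_d). -/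
/-
Write c := 1 / (1 + ∑_{j ∈ 𝒥} r_j) and B := I − A^{(p;1)}_{(𝒥)}. Each
e^{(p)}_{(j,k)} = (e_j − r_j e_n)(e_k − e_n)ᵀ kills 1 on the right and p on the left, since
p_j − r_j p_n = 0; so B1 = 1 and pB = p for any combination of them. Computing entries, B is
the identity on the rows outside 𝒥 ∪ {n}, and every row indexed by 𝒥 ∪ {n} is p conditioned
on 𝒥 ∪ {n}: mass r_k c at k ∈ 𝒥 and c at n. In particular B ≥ 0.
-/

open Matrix

namespace Barker

variable {m : ℕ} (p : Fin (m + 1) → ℝ)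

lemma Ep_apply (j k : Fin m) (a b : Fin (m + 1)) :
    Ep m p j k a b =
      ((if a = j.castSucc then 1 else 0) - r m p j * (if a = Fin.last m then 1 else 0)) *
        ((if b = k.castSucc then 1 else 0) - (if b = Fin.last m then 1 else 0)) :=
  rfl

lemma Ep_mulVec_one (j k : Fin m) : Ep m p j k *ᵥ (fun _ => 1) = 0 := by
  rw [Ep, vecMulVec_mulVec]
  simp [dotProduct, Finset.sum_sub_distrib]

lemma vecMul_Ep (hp : p (Fin.last m) ≠ 0) (j k : Fin m) : p ᵥ* Ep m p j k = 0 := by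
  rw [Ep, vecMul_vecMulVec]
  simp [dotProduct, mul_sub, r, mul_div_cancel₀ _ hp]

lemma r_pos (hp : ∀ a, 0 < p a) (j : Fin m) : 0 < r m p j :=
  div_pos (hp _) (hp _)

lemma one_add_sum_r_pos (hp : ∀ a, 0 < p a) (s : Finset (Fin m)) :
    0 < 1 + ∑ l ∈ s, r m p l :=
  add_pos_of_pos_of_nonneg one_pos (Finset.sum_nonneg fun k _ => (r_pos p hp k).le)

variable (s : Finset (Fin m))

/-- `A^{(p;1)}_{(𝒥)}` with `𝒥` given as a finset rather than an injective tuple. -/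
noncomputable def generator : Matrix (Fin (m + 1)) (Fin (m + 1)) ℝ :=
  ∑ j ∈ s, ∑ k ∈ s, ((if j = k then (1 : ℝ) else 0) - r m p k / (1 + ∑ l ∈ s, r m p l)) •
    Ep m p j k

lemma AJ_eq_smul_generator {d : ℕ} {J : Fin d → Fin m} (hJ : Function.Injective J) (ω : ℝ) :
    AJ m d p J ω = ω • generator p (Finset.univ.map ⟨J, hJ⟩) := by
  simp [AJ, generator, Finset.sum_map]

lemma generator_mulVec_one : generator p s *ᵥ (fun _ => 1) = 0 := by
  simp [generator, sum_mulVec, smul_mulVec, Ep_mulVec_one]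

lemma vecMul_generator (hp : p (Fin.last m) ≠ 0) : p ᵥ* generator p s = 0 := by
  simp [generator, vecMul_sum, vecMul_smul, vecMul_Ep p hp]

variable {s}

lemma generator_castSucc_castSucc (i k : Fin m) :
    generator p s i.castSucc k.castSucc =
      if i ∈ s ∧ k ∈ s then
        (if i = k then 1 else 0) - r m p k / (1 + ∑ l ∈ s, r m p l)
      else 0 := by
  by_cases hi : i ∈ s <;> by_cases hk : k ∈ s <;>
    simp [generator, Matrix.sum_apply, Ep_apply, Fin.castSucc_ne_last, hi, hk]

section

variable (hS : 1 + ∑ l ∈ s, r m p l ≠ 0)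
include hS

lemma sum_r_div_one_add_sum_r :
    (∑ l ∈ s, r m p l) / (1 + ∑ l ∈ s, r m p l) = 1 - 1 / (1 + ∑ l ∈ s, r m p l) := by
  field_simp
  ring

lemma generator_last_last :
    generator p s (Fin.last m) (Fin.last m) =
      (∑ l ∈ s, r m p l) / (1 + ∑ l ∈ s, r m p l) := by
  simp only [generator, Matrix.sum_apply, Matrix.smul_apply, Ep_apply, smul_eq_mul,
    (Fin.castSucc_ne_last _).symm, ↓reduceIte, mul_one, zero_sub, mul_neg, neg_neg, sub_mul,
    ite_mul, one_mul, zero_mul, Finset.sum_sub_distrib, Finset.sum_ite_eq, ← Finset.sum_mul,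
    ← Finset.sum_div, Finset.sum_ite_mem, Finset.inter_self, ← Finset.mul_sum]
  linear_combination -(∑ l ∈ s, r m p l) * sum_r_div_one_add_sum_r p hS

lemma generator_castSucc_last (i : Fin m) :
    generator p s i.castSucc (Fin.last m) =
      if i ∈ s then -(1 / (1 + ∑ l ∈ s, r m p l)) else 0 := by
  split_ifs with hi
  · simp only [generator, Matrix.sum_apply, Matrix.smul_apply, Ep_apply, smul_eq_mul,
      Fin.castSucc_inj, Fin.castSucc_ne_last, (Fin.castSucc_ne_last _).symm, ↓reduceIte,
      mul_zero, sub_zero, zero_sub, mul_neg, mul_one, mul_ite, Finset.sum_neg_distrib,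
      Finset.sum_ite_irrel, Finset.sum_sub_distrib, Finset.sum_ite_eq, ← Finset.sum_div,
      Finset.sum_const_zero, hi, neg_sub]
    linear_combination sum_r_div_one_add_sum_r p hS
  · simp [generator, Matrix.sum_apply, Ep_apply, Fin.castSucc_ne_last, hi]

lemma generator_last_castSucc (k : Fin m) :
    generator p s (Fin.last m) k.castSucc =
      if k ∈ s then -(r m p k / (1 + ∑ l ∈ s, r m p l)) else 0 := by
  split_ifs with hk
  · simp only [generator, Matrix.sum_apply, Matrix.smul_apply, Ep_apply, smul_eq_mul,
      Fin.castSucc_inj, Fin.castSucc_ne_last, (Fin.castSucc_ne_last _).symm, ↓reduceIte,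
      mul_one, zero_sub, sub_zero, mul_ite, mul_zero, mul_neg, sub_mul, ite_mul, one_mul,
      zero_mul, neg_sub, Finset.sum_ite_eq, Finset.sum_ite_eq', hk, Finset.sum_sub_distrib,
      ← Finset.mul_sum]
    linear_combination r m p k * sum_r_div_one_add_sum_r p hS
  · simp [generator, Matrix.sum_apply, Ep_apply, Fin.castSucc_ne_last, hk]

lemma one_sub_generator_last_castSucc {k : Fin m} (hk : k ∈ s) :
    (1 - generator p s) (Fin.last m) k.castSucc = r m p k / (1 + ∑ l ∈ s, r m p l) := by
  rw [Matrix.sub_apply, one_apply, if_neg (Fin.castSucc_ne_last _).symm,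
    generator_last_castSucc p hS, if_pos hk, zero_sub, neg_neg]

lemma one_sub_generator_last_last :
    (1 - generator p s) (Fin.last m) (Fin.last m) = 1 / (1 + ∑ l ∈ s, r m p l) := by
  rw [Matrix.sub_apply, one_apply, if_pos rfl, generator_last_last p hS,
    sum_r_div_one_add_sum_r p hS, sub_sub_cancel]

end

lemma one_sub_generator_nonneg (hp : ∀ a, 0 < p a) (a b : Fin (m + 1)) :
    0 ≤ (1 - generator p s) a b := by
  have hS := one_add_sum_r_pos p hp s
  rw [Matrix.sub_apply, one_apply]
  cases a using Fin.lastCases with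
  | last =>
    cases b using Fin.lastCases with
    | last =>
      rw [generator_last_last p hS.ne', if_pos rfl, sub_nonneg, div_le_one hS]
      linarith
    | cast k =>
      rw [generator_last_castSucc p hS.ne', if_neg (Fin.castSucc_ne_last _).symm]
      split_ifs <;> simp only [sub_neg_eq_add, zero_add, sub_zero, le_refl]
      exact div_nonneg (r_pos p hp k).le hS.le
  | cast i =>
    cases b using Fin.lastCases with
    | last =>
      rw [generator_castSucc_last p hS.ne', if_neg (Fin.castSucc_ne_last _)]
      split_ifs <;> simp only [sub_neg_eq_add, zero_add, sub_zero, le_refl]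
      exact div_nonneg zero_le_one hS.le
    | cast k =>
      simp only [generator_castSucc_castSucc, Fin.castSucc_inj]
      have := div_nonneg (r_pos p hp k).le hS.le
      split_ifs <;> linarith

end Barker

theorem stmt16_general (m d : ℕ) (p : Fin (m + 1) → ℝ)
    (hp : ∀ a, 0 < p a)
    (J : Fin d → Fin m) (hJ : Function.Injective J) :
    (∀ ω : ℝ, ω ≠ 0 →
      (1 : Matrix (Fin (m + 1)) (Fin (m + 1)) ℝ) - ω⁻¹ • AJ m d p J ω =
        (1 : Matrix (Fin (m + 1)) (Fin (m + 1)) ℝ) - AJ m d p J 1) ∧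
    (∀ a b, 0 ≤ ((1 : Matrix (Fin (m + 1)) (Fin (m + 1)) ℝ) - AJ m d p J 1) a b) ∧
    ((1 : Matrix (Fin (m + 1)) (Fin (m + 1)) ℝ) - AJ m d p J 1).mulVec
      (fun _ => (1 : ℝ)) = (fun _ => (1 : ℝ)) ∧
    Matrix.vecMul p ((1 : Matrix (Fin (m + 1)) (Fin (m + 1)) ℝ) - AJ m d p J 1) = p ∧
    (∀ u : Fin d,
      ((1 : Matrix (Fin (m + 1)) (Fin (m + 1)) ℝ) - AJ m d p J 1) (Fin.last m)
          (J u).castSucc = r m p (J u) / (1 + ∑ w, r m p (J w))) ∧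
    ((1 : Matrix (Fin (m + 1)) (Fin (m + 1)) ℝ) - AJ m d p J 1) (Fin.last m) (Fin.last m) =
      1 / (1 + ∑ w, r m p (J w)) := by
  set s := Finset.univ.map ⟨J, hJ⟩
  have hmass : ∑ w, r m p (J w) = ∑ l ∈ s, r m p l :=
    (Finset.sum_map Finset.univ ⟨J, hJ⟩ (r m p)).symm
  have hS := (Barker.one_add_sum_r_pos p hp s).ne'
  simp only [Barker.AJ_eq_smul_generator p hJ, one_smul, hmass]
  refine ⟨fun ω hω => by rw [smul_smul, inv_mul_cancel₀ hω, one_smul],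
    Barker.one_sub_generator_nonneg p hp, ?_, ?_,
    fun u => Barker.one_sub_generator_last_castSucc p hS
      (Finset.mem_map_of_mem _ (Finset.mem_univ u)),
    Barker.one_sub_generator_last_last p hS⟩
  · rw [sub_mulVec, one_mulVec, Barker.generator_mulVec_one, sub_zero]
  · rw [vecMul_sub, vecMul_one, Barker.vecMul_generator p s (hp _).ne', sub_zero]

/-- the Barker matrix `𝓑^{(p)}_{(𝒥)} = I − ω⁻¹ A^{(p;ω)}_{(𝒥)}` does not
depend on `ω ≠ 0` (it equals `I − A^{(p;1)}_{(𝒥)}`), lies in `⟨p⟩⁺`, and its row-`n`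
entries are `(𝓑)_{n j_u} = r_{j_u}/(1 + r_{(𝒥)} 1_d)` and `(𝓑)_{nn} = 1/(1 + r_{(𝒥)} 1_d)`. -/
theorem stmt16 (m d : ℕ) (hm : 1 ≤ m) (hd : 1 ≤ d) (p : Fin (m + 1) → ℝ)
    (hp : ∀ a, 0 < p a) (hsum : ∑ a, p a = 1)
    (J : Fin d → Fin m) (hJ : Function.Injective J) :
    (∀ ω : ℝ, ω ≠ 0 →
      (1 : Matrix (Fin (m + 1)) (Fin (m + 1)) ℝ) - ω⁻¹ • AJ m d p J ω =
        (1 : Matrix (Fin (m + 1)) (Fin (m + 1)) ℝ) - AJ m d p J 1) ∧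
    (∀ a b, 0 ≤ ((1 : Matrix (Fin (m + 1)) (Fin (m + 1)) ℝ) - AJ m d p J 1) a b) ∧
    ((1 : Matrix (Fin (m + 1)) (Fin (m + 1)) ℝ) - AJ m d p J 1).mulVec
      (fun _ => (1 : ℝ)) = (fun _ => (1 : ℝ)) ∧
    Matrix.vecMul p ((1 : Matrix (Fin (m + 1)) (Fin (m + 1)) ℝ) - AJ m d p J 1) = p ∧
    (∀ u : Fin d,
      ((1 : Matrix (Fin (m + 1)) (Fin (m + 1)) ℝ) - AJ m d p J 1) (Fin.last m)
          (J u).castSucc = r m p (J u) / (1 + ∑ w, r m p (J w))) ∧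
    ((1 : Matrix (Fin (m + 1)) (Fin (m + 1)) ℝ) - AJ m d p J 1) (Fin.last m) (Fin.last m) =
      1 / (1 + ∑ w, r m p (J w)) :=
  stmt16_general m d p hp J hJ
end

section
/- Suppose the (n−1)×(n−1) real matrix τ is supported on 𝒥, i.e., τ_{jk} = 0 whenever j ∉ 𝒥 or k ∉ 𝒥. Then the n×n matrix I − τ^{(p)}_{(𝒥)} belongs to ⟨p⟩^+ if and only if all of the following entrywise inequalities hold: 0 ≤ I_{n−1} − τ ≤ 1; 0 ≤ τ 1_𝒥^- ≤ 1 (componentwise); 0 ≤ r_𝒥^- τ ≤ 1 (componentwise); and 0 ≤ r_𝒥^- τ 1_𝒥^- ≤ 1. -/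
open Matrix

/-- `1_𝒥^-`, the indicator (column) vector of `𝒥 ⊆ [n-1]` in `ℝ^{n-1}`. -/
def oneJ (m : ℕ) (𝒥 : Finset (Fin m)) : Fin m → ℝ :=
  fun j => if j ∈ 𝒥 then 1 else 0

/-- `r_𝒥^-`, the row vector in `ℝ^{n-1}` with `(r_𝒥^-)_j = r_j` for `j ∈ 𝒥`, `0` otherwise. -/
noncomputable def rJ (m : ℕ) (p : Fin (m + 1) → ℝ) (𝒥 : Finset (Fin m)) : Fin m → ℝ :=
  fun j => if j ∈ 𝒥 then r m p j else 0

/-- The block matrix `τ^{(p)}_{(𝒥)}`: upper-left `(n-1) × (n-1)` block `τ`, first `n-1`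
entries of the last column `−τ 1_𝒥^-`, first `n-1` entries of the last row `−r_𝒥^- τ`,
and `(n,n)` entry `r_𝒥^- τ 1_𝒥^-`. -/
noncomputable def tauExt (m : ℕ) (p : Fin (m + 1) → ℝ) (𝒥 : Finset (Fin m))
    (τ : Matrix (Fin m) (Fin m) ℝ) : Matrix (Fin (m + 1)) (Fin (m + 1)) ℝ :=
  Matrix.of fun a b =>
    Fin.lastCases
      (Fin.lastCases (dotProduct (rJ m p 𝒥) (τ.mulVec (oneJ m 𝒥)))
        (fun b' => -(Matrix.vecMul (rJ m p 𝒥) τ b')) b)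
      (fun a' => Fin.lastCases (-(τ.mulVec (oneJ m 𝒥) a')) (fun b' => τ a' b') b) a

theorem Matrix.apply_le_one_of_nonneg_of_mulVec_eq_one {ι κ R : Type*} [Fintype κ]
    [Semiring R] [Preorder R] [AddLeftMono R] {P : Matrix ι κ R}
    (h0 : ∀ i j, 0 ≤ P i j) (h1 : P *ᵥ (fun _ => 1) = fun _ => 1) (i : ι) (j : κ) :
    P i j ≤ 1 :=
  calc P i j ≤ ∑ k, P i k := Finset.single_le_sum (fun k _ => h0 i k) (Finset.mem_univ j)
    _ = 1 := by simpa [mulVec, dotProduct] using congrFun h1 i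

section tauExt

variable {m : ℕ} {p : Fin (m + 1) → ℝ} {𝒥 : Finset (Fin m)} {τ : Matrix (Fin m) (Fin m) ℝ}

@[simp]
theorem tauExt_castSucc_castSucc (j k : Fin m) :
    tauExt m p 𝒥 τ j.castSucc k.castSucc = τ j k := by
  simp [tauExt]

@[simp]
theorem tauExt_castSucc_last (j : Fin m) :
    tauExt m p 𝒥 τ j.castSucc (Fin.last m) = -(τ *ᵥ oneJ m 𝒥) j := by
  simp [tauExt]

@[simp]
theorem tauExt_last_castSucc (k : Fin m) :
    tauExt m p 𝒥 τ (Fin.last m) k.castSucc = -(rJ m p 𝒥 ᵥ* τ) k := by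
  simp [tauExt]

@[simp]
theorem tauExt_last_last :
    tauExt m p 𝒥 τ (Fin.last m) (Fin.last m) = rJ m p 𝒥 ⬝ᵥ (τ *ᵥ oneJ m 𝒥) := by
  simp [tauExt]

theorem one_sub_tauExt_castSucc_castSucc (j k : Fin m) :
    (1 - tauExt m p 𝒥 τ) j.castSucc k.castSucc = (1 - τ) j k := by
  simp [one_apply]

theorem one_sub_tauExt_castSucc_last (j : Fin m) :
    (1 - tauExt m p 𝒥 τ) j.castSucc (Fin.last m) = (τ *ᵥ oneJ m 𝒥) j := by
  simp [one_apply_ne (Fin.castSucc_ne_last j)]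

theorem one_sub_tauExt_last_castSucc (k : Fin m) :
    (1 - tauExt m p 𝒥 τ) (Fin.last m) k.castSucc = (rJ m p 𝒥 ᵥ* τ) k := by
  simp [one_apply_ne (Fin.castSucc_ne_last k).symm]

theorem one_sub_tauExt_last_last :
    (1 - tauExt m p 𝒥 τ) (Fin.last m) (Fin.last m) = 1 - rJ m p 𝒥 ⬝ᵥ (τ *ᵥ oneJ m 𝒥) := by
  simp

theorem one_sub_tauExt_mem_Icc_iff :
    (∀ a b, 0 ≤ (1 - tauExt m p 𝒥 τ) a b ∧ (1 - tauExt m p 𝒥 τ) a b ≤ 1) ↔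
      ((∀ j k, 0 ≤ (1 - τ) j k ∧ (1 - τ) j k ≤ 1) ∧
        (∀ j, 0 ≤ (τ *ᵥ oneJ m 𝒥) j ∧ (τ *ᵥ oneJ m 𝒥) j ≤ 1) ∧
        (∀ k, 0 ≤ (rJ m p 𝒥 ᵥ* τ) k ∧ (rJ m p 𝒥 ᵥ* τ) k ≤ 1) ∧
        (0 ≤ rJ m p 𝒥 ⬝ᵥ (τ *ᵥ oneJ m 𝒥) ∧ rJ m p 𝒥 ⬝ᵥ (τ *ᵥ oneJ m 𝒥) ≤ 1)) := by
  simp only [Fin.forall_fin_succ', forall_and, one_sub_tauExt_castSucc_castSucc,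
    one_sub_tauExt_castSucc_last, one_sub_tauExt_last_castSucc, one_sub_tauExt_last_last,
    sub_nonneg, sub_le_self_iff]
  tauto

theorem mulVec_oneJ_eq_mulVec_one (hτ : ∀ j, ∀ k ∉ 𝒥, τ j k = 0) :
    τ *ᵥ oneJ m 𝒥 = τ *ᵥ 1 := by
  ext j
  simp only [mulVec, dotProduct]
  refine Finset.sum_congr rfl fun k _ => ?_
  by_cases hk : k ∈ 𝒥 <;> simp [oneJ, hk, hτ j k]

theorem tauExt_mulVec_one (hτ : ∀ j, ∀ k ∉ 𝒥, τ j k = 0) : tauExt m p 𝒥 τ *ᵥ 1 = 0 := by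
  ext a
  simp only [mulVec, dotProduct_one, Fin.sum_univ_castSucc, Pi.zero_apply]
  refine Fin.lastCases ?_ (fun j => ?_) a
  · simp only [tauExt_last_castSucc, tauExt_last_last, mulVec_oneJ_eq_mulVec_one hτ,
      dotProduct_mulVec, dotProduct_one, Finset.sum_neg_distrib, neg_add_cancel]
  · rw [tauExt_castSucc_last, mulVec_oneJ_eq_mulVec_one hτ]
    simp only [tauExt_castSucc_castSucc, mulVec, dotProduct_one, add_neg_cancel]

theorem last_smul_rJ_vecMul (hp : p (Fin.last m) ≠ 0) (hτ : ∀ j ∉ 𝒥, ∀ k, τ j k = 0) :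
    (p (Fin.last m) • rJ m p 𝒥) ᵥ* τ = (fun j => p j.castSucc) ᵥ* τ := by
  ext k
  simp only [vecMul, dotProduct]
  refine Finset.sum_congr rfl fun j _ => ?_
  by_cases hj : j ∈ 𝒥
  · simp [rJ, r, hj, mul_div_cancel₀ _ hp]
  · simp [hτ j hj]

theorem vecMul_tauExt (hp : p (Fin.last m) ≠ 0) (hτ : ∀ j ∉ 𝒥, ∀ k, τ j k = 0) :
    p ᵥ* tauExt m p 𝒥 τ = 0 := by
  have key := last_smul_rJ_vecMul hp hτ
  ext b
  simp only [vecMul, dotProduct, Fin.sum_univ_castSucc, Pi.zero_apply]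
  refine Fin.lastCases ?_ (fun k => ?_) b
  · have h := congrArg (· ⬝ᵥ oneJ m 𝒥) key
    simp only [← dotProduct_mulVec, smul_dotProduct, smul_eq_mul] at h
    simp only [tauExt_castSucc_last, tauExt_last_last, mul_neg, Finset.sum_neg_distrib]
    rw [h]
    simp only [dotProduct, neg_add_cancel]
  · have h := congrFun key k
    simp only [smul_vecMul, Pi.smul_apply, smul_eq_mul] at h
    simp only [tauExt_castSucc_castSucc, tauExt_last_castSucc, mul_neg]
    rw [h]
    simp only [vecMul, dotProduct, add_neg_cancel]

end tauExt

theorem stmt18_general (m : ℕ) (p : Fin (m + 1) → ℝ)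
    (hp : ∀ a, 0 < p a) (𝒥 : Finset (Fin m))
    (τ : Matrix (Fin m) (Fin m) ℝ)
    (hτ : ∀ j k : Fin m, (j ∉ 𝒥 ∨ k ∉ 𝒥) → τ j k = 0) :
    ((∀ a b, 0 ≤ ((1 : Matrix (Fin (m + 1)) (Fin (m + 1)) ℝ) - tauExt m p 𝒥 τ) a b) ∧
      ((1 : Matrix (Fin (m + 1)) (Fin (m + 1)) ℝ) - tauExt m p 𝒥 τ).mulVec
        (fun _ => (1 : ℝ)) = (fun _ => (1 : ℝ)) ∧
      Matrix.vecMul p ((1 : Matrix (Fin (m + 1)) (Fin (m + 1)) ℝ) - tauExt m p 𝒥 τ) = p) ↔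
    ((∀ j k : Fin m, 0 ≤ ((1 : Matrix (Fin m) (Fin m) ℝ) - τ) j k ∧
        ((1 : Matrix (Fin m) (Fin m) ℝ) - τ) j k ≤ 1) ∧
      (∀ j : Fin m, 0 ≤ τ.mulVec (oneJ m 𝒥) j ∧ τ.mulVec (oneJ m 𝒥) j ≤ 1) ∧
      (∀ k : Fin m, 0 ≤ Matrix.vecMul (rJ m p 𝒥) τ k ∧ Matrix.vecMul (rJ m p 𝒥) τ k ≤ 1) ∧
      (0 ≤ dotProduct (rJ m p 𝒥) (τ.mulVec (oneJ m 𝒥)) ∧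
        dotProduct (rJ m p 𝒥) (τ.mulVec (oneJ m 𝒥)) ≤ 1)) := by
  have hstoch : (1 - tauExt m p 𝒥 τ) *ᵥ 1 = 1 := by
    rw [sub_mulVec, one_mulVec, tauExt_mulVec_one fun j k hk => hτ j k (Or.inr hk), sub_zero]
  have hstat : p ᵥ* (1 - tauExt m p 𝒥 τ) = p := by
    rw [vecMul_sub, vecMul_one, vecMul_tauExt (hp _).ne' fun j hj k => hτ j k (Or.inl hj),
      sub_zero]
  rw [← one_sub_tauExt_mem_Icc_iff]
  exact ⟨fun ⟨h0, h1, _⟩ a b => ⟨h0 a b, apply_le_one_of_nonneg_of_mulVec_eq_one h0 h1 a b⟩,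
    fun h => ⟨fun a b => (h a b).1, hstoch, hstat⟩⟩

/-- if `τ` is supported on `𝒥`, then `I − τ^{(p)}_{(𝒥)} ∈ ⟨p⟩⁺` iff
`0 ≤ I_{n−1} − τ ≤ 1` (entrywise), `0 ≤ τ 1_𝒥^- ≤ 1`, `0 ≤ r_𝒥^- τ ≤ 1`
(componentwise), and `0 ≤ r_𝒥^- τ 1_𝒥^- ≤ 1`. -/
theorem stmt18 (m : ℕ) (hm : 1 ≤ m) (p : Fin (m + 1) → ℝ)
    (hp : ∀ a, 0 < p a) (hsum : ∑ a, p a = 1) (𝒥 : Finset (Fin m))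
    (τ : Matrix (Fin m) (Fin m) ℝ)
    (hτ : ∀ j k : Fin m, (j ∉ 𝒥 ∨ k ∉ 𝒥) → τ j k = 0) :
    ((∀ a b, 0 ≤ ((1 : Matrix (Fin (m + 1)) (Fin (m + 1)) ℝ) - tauExt m p 𝒥 τ) a b) ∧
      ((1 : Matrix (Fin (m + 1)) (Fin (m + 1)) ℝ) - tauExt m p 𝒥 τ).mulVec
        (fun _ => (1 : ℝ)) = (fun _ => (1 : ℝ)) ∧
      Matrix.vecMul p ((1 : Matrix (Fin (m + 1)) (Fin (m + 1)) ℝ) - tauExt m p 𝒥 τ) = p) ↔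
    ((∀ j k : Fin m, 0 ≤ ((1 : Matrix (Fin m) (Fin m) ℝ) - τ) j k ∧
        ((1 : Matrix (Fin m) (Fin m) ℝ) - τ) j k ≤ 1) ∧
      (∀ j : Fin m, 0 ≤ τ.mulVec (oneJ m 𝒥) j ∧ τ.mulVec (oneJ m 𝒥) j ≤ 1) ∧
      (∀ k : Fin m, 0 ≤ Matrix.vecMul (rJ m p 𝒥) τ k ∧ Matrix.vecMul (rJ m p 𝒥) τ k ≤ 1) ∧
      (0 ≤ dotProduct (rJ m p 𝒥) (τ.mulVec (oneJ m 𝒥)) ∧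
        dotProduct (rJ m p 𝒥) (τ.mulVec (oneJ m 𝒥)) ≤ 1)) :=
  stmt18_general m p hp 𝒥 τ hτ
end
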